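/- arXiv:math/0410315 — 2 statements merged into one kernel-verified Lean document; each statement's English description precedes it below -/
import Mathlib

section
/- Let G be a group acting on the left on a set M, let μ be a measure on G, and let c : M → ℝ be a function such that for every x ∈ M the function h ↦ c(h•x)² is μ-integrable and ∫_G c(h•x)² dμ(h) = 1 (a cut-off function). Define e : G × M → ℝ by e(g, x) = c(x)·c(g•x). Then e is an idempotent for the crossed-product convolution: for all g ∈ G and x ∈ M, ∫_G e(h, x)·e(gh⁻¹, h•x) dμ(h) = e(g, x). -/
open MeasureTheory

theorem cutoff_idempotent_general
    {G M : Type*} [Group G] [MulAction G M] [MeasurableSpace G] (μ : Measure G)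
    (c : M → ℝ)
    (hcut : ∀ x : M, ∫ h, (c (h • x)) ^ 2 ∂μ = 1)
    (g : G) (x : M) :
    ∫ h, (c x * c (h • x)) * (c (h • x) * c ((g * h⁻¹) • (h • x))) ∂μ =
      c x * c (g • x) := by
  have integrand_eq (h : G) :
      (c x * c (h • x)) * (c (h • x) * c ((g * h⁻¹) • (h • x))) =
        (c x * c (g • x)) * c (h • x) ^ 2 := by
    rw [smul_smul, inv_mul_cancel_right]
    ring
  simp_rw [integrand_eq]
  rw [integral_const_mul, hcut x, mul_one]

/-- **The cut-off idempotent.**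
Let a group `G` act on a set `M`, let `μ` be a measure on `G`, and let `c : M → ℝ`
be a cut-off function: for every `x`, `h ↦ c(h•x)²` is integrable with integral `1`.
Then `e(g, x) = c(x)·c(g•x)` is an idempotent for the crossed-product convolution:
`∫ e(h, x)·e(gh⁻¹, h•x) dμ(h) = e(g, x)`. -/
theorem cutoff_idempotent
    {G M : Type*} [Group G] [MulAction G M] [MeasurableSpace G] (μ : Measure G)
    (c : M → ℝ)
    (hint : ∀ x : M, Integrable (fun h : G => (c (h • x)) ^ 2) μ)
    (hcut : ∀ x : M, ∫ h, (c (h • x)) ^ 2 ∂μ = 1)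
    (g : G) (x : M) :
    ∫ h, (c x * c (h • x)) * (c (h • x) * c ((g * h⁻¹) • (h • x))) ∂μ =
      c x * c (g • x) :=
  cutoff_idempotent_general μ c hcut g x
end

section
/- Let A be a unital complex Banach algebra and e ∈ A an element such that ‖e − e²‖ < 1/4. Then the series ê = e + Σ_{k≥1} ((2k)!/(k!)²) · (e − 1/2) · (e − e²)^k converges absolutely in A, and its sum is an idempotent: ê² = ê. -/
/-!
Put `x = e - e²` and `c = e - 1/2`, so that `c² = 1/4 - x` and `c` commutes with `x`. The series
is `ê = 1/2 + c F` with `F = Σ C(2k,k) xᵏ = (1 - 4x)^(-1/2)`. The convolution identity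
`Σ_{i+j=n} C(2i,i) C(2j,j) = 4ⁿ` gives `F² = Σ (4x)ⁿ = (1 - 4x)⁻¹`, hence
`(cF)² = c² F² = 1/4`, and any `p` with `p² = 1/4` makes `1/2 + p` idempotent.
-/

open Finset

namespace Nat

theorem two_mul_sum_antidiagonal_fst_mul_centralBinom (n : ℕ) :
    2 * ∑ p ∈ antidiagonal n, p.1 * (p.1.centralBinom * p.2.centralBinom) =
      n * ∑ p ∈ antidiagonal n, p.1.centralBinom * p.2.centralBinom := by
  rw [two_mul]
  nth_rewrite 2 [← Finset.Nat.sum_antidiagonal_swap]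
  rw [← sum_add_distrib, mul_sum]
  refine sum_congr rfl fun p hp => ?_
  rw [Prod.fst_swap, Prod.snd_swap, ← mem_antidiagonal.mp hp]
  ring

theorem sum_antidiagonal_succ_fst_mul_centralBinom (n : ℕ) :
    ∑ p ∈ antidiagonal (n + 1), p.1 * (p.1.centralBinom * p.2.centralBinom) =
      4 * ∑ p ∈ antidiagonal n, p.1 * (p.1.centralBinom * p.2.centralBinom) +
        2 * ∑ p ∈ antidiagonal n, p.1.centralBinom * p.2.centralBinom := by
  rw [Finset.Nat.sum_antidiagonal_succ, zero_mul, zero_add, mul_sum, mul_sum, ← sum_add_distrib]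
  refine sum_congr rfl fun p _ => ?_
  rw [← mul_assoc, succ_mul_centralBinom_succ]
  ring

theorem sum_antidiagonal_centralBinom_mul_centralBinom (n : ℕ) :
    ∑ p ∈ antidiagonal n, p.1.centralBinom * p.2.centralBinom = 4 ^ n := by
  induction n with
  | zero => simp
  | succ n ih =>
    refine Nat.eq_of_mul_eq_mul_left n.succ_pos ?_
    calc (n + 1) * ∑ p ∈ antidiagonal (n + 1), p.1.centralBinom * p.2.centralBinom
        = 2 * ∑ p ∈ antidiagonal (n + 1), p.1 * (p.1.centralBinom * p.2.centralBinom) :=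
          (two_mul_sum_antidiagonal_fst_mul_centralBinom (n + 1)).symm
      _ = 4 * (2 * ∑ p ∈ antidiagonal n, p.1 * (p.1.centralBinom * p.2.centralBinom)) +
            4 * ∑ p ∈ antidiagonal n, p.1.centralBinom * p.2.centralBinom := by
          rw [sum_antidiagonal_succ_fst_mul_centralBinom]
          ring
      _ = (n + 1) * 4 ^ (n + 1) := by
          rw [two_mul_sum_antidiagonal_fst_mul_centralBinom, ih]
          ring

end Nat

section CentralBinomSeries

variable {A : Type*} [NormedRing A]

/-- The power series of `(1 - 4x)^(-1/2)`. -/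
noncomputable def centralBinomSeries (x : A) : A :=
  ∑' k, k.centralBinom • x ^ k

theorem summable_norm_centralBinom_smul_pow {x : A} (hx : ‖x‖ < 1 / 4) :
    Summable fun k => ‖k.centralBinom • x ^ k‖ := by
  have hgeo : Summable fun k : ℕ => (4 * ‖x‖) ^ k :=
    summable_geometric_of_lt_one (by positivity) (by linarith)
  refine hgeo.of_norm_bounded_eventually_nat ?_
  filter_upwards [eventually_norm_pow_le x] with k hk
  calc ‖‖k.centralBinom • x ^ k‖‖ = ‖k.centralBinom • x ^ k‖ := norm_norm _
    _ ≤ k.centralBinom * ‖x ^ k‖ := norm_nsmul_le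
    _ ≤ 4 ^ k * ‖x‖ ^ k := by
        gcongr
        exact_mod_cast Nat.centralBinom_le_four_pow k
    _ = (4 * ‖x‖) ^ k := (mul_pow _ _ _).symm

theorem Commute.centralBinomSeries_right {a x : A} (h : Commute a x) :
    Commute a (centralBinomSeries x) :=
  Commute.tsum_right a fun k => (h.pow_right k).smul_right _

variable [CompleteSpace A]

theorem tsum_centralBinom_succ_smul_pow {x : A} (hx : ‖x‖ < 1 / 4) :
    ∑' k, (k + 1).centralBinom • x ^ (k + 1) = centralBinomSeries x - 1 := by
  rw [centralBinomSeries, (summable_norm_centralBinom_smul_pow hx).of_norm.tsum_eq_zero_add,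
    Nat.centralBinom_zero, pow_zero, one_smul, add_sub_cancel_left]

theorem centralBinomSeries_sq {x : A} (hx : ‖x‖ < 1 / 4) :
    centralBinomSeries x ^ 2 = ∑' n, (4 • x) ^ n := by
  have hs := summable_norm_centralBinom_smul_pow hx
  rw [sq, centralBinomSeries, tsum_mul_tsum_eq_tsum_sum_antidiagonal_of_summable_norm hs hs]
  refine tsum_congr fun n => ?_
  calc ∑ p ∈ antidiagonal n, p.1.centralBinom • x ^ p.1 * p.2.centralBinom • x ^ p.2
      = ∑ p ∈ antidiagonal n, (p.1.centralBinom * p.2.centralBinom) • x ^ n :=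
        sum_congr rfl fun p hp => by
          rw [smul_mul_smul_comm, ← pow_add, mem_antidiagonal.mp hp]
    _ = (4 • x) ^ n := by
        rw [← sum_smul, Nat.sum_antidiagonal_centralBinom_mul_centralBinom, smul_pow]

theorem one_sub_four_nsmul_mul_centralBinomSeries_sq {x : A} (hx : ‖x‖ < 1 / 4) :
    (1 - 4 • x) * centralBinomSeries x ^ 2 = 1 := by
  rw [centralBinomSeries_sq hx]
  refine mul_neg_geom_series _ (norm_nsmul_le.trans_lt ?_)
  push_cast
  linarith

end CentralBinomSeries

theorem isIdempotentElem_half_smul_one_add {𝕜 A : Type*} [Field 𝕜] [NeZero (2 : 𝕜)] [Ring A]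
    [Algebra 𝕜 A] {p : A} (hp : p ^ 2 = (4⁻¹ : 𝕜) • 1) :
    IsIdempotentElem ((2⁻¹ : 𝕜) • 1 + p) := by
  have hp' : p * p = (4⁻¹ : 𝕜) • 1 := by rw [← sq, hp]
  have h4 : (4 : 𝕜) = 2 * 2 := by norm_num
  simp only [IsIdempotentElem, add_mul, mul_add, hp', smul_mul_assoc, mul_smul_comm, one_mul,
    mul_one, h4]
  match_scalars <;> field_simp <;> ring

/-- **The canonical idempotent lift.**
Let `A` be a unital complex Banach algebra and `e ∈ A` with `‖e − e²‖ < 1/4`.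
Then the series `ê = e + Σ_{k≥1} ((2k)!/(k!)²)·(e − 1/2)·(e − e²)^k` converges
absolutely in `A` and its sum is an idempotent: `ê² = ê`. -/
theorem idempotent_lift_series {A : Type*} [NormedRing A] [NormedAlgebra ℂ A]
    [CompleteSpace A] (e : A) (he : ‖e - e ^ 2‖ < 1 / 4) :
    (Summable fun k : ℕ =>
      ‖((2 * (k + 1)).choose (k + 1)) •
        ((e - (2⁻¹ : ℂ) • (1 : A)) * (e - e ^ 2) ^ (k + 1))‖) ∧
    (e + ∑' k : ℕ, ((2 * (k + 1)).choose (k + 1)) •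
        ((e - (2⁻¹ : ℂ) • (1 : A)) * (e - e ^ 2) ^ (k + 1))) ^ 2 =
      e + ∑' k : ℕ, ((2 * (k + 1)).choose (k + 1)) •
        ((e - (2⁻¹ : ℂ) • (1 : A)) * (e - e ^ 2) ^ (k + 1)) := by
  set x := e - e ^ 2
  set c := e - (2⁻¹ : ℂ) • (1 : A)
  have hterm (k : ℕ) : (2 * (k + 1)).choose (k + 1) • (c * x ^ (k + 1)) =
      c * ((k + 1).centralBinom • x ^ (k + 1)) := by
    rw [← Nat.centralBinom_eq_two_mul_choose, mul_smul_comm]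
  have htail : Summable fun k => ‖(k + 1).centralBinom • x ^ (k + 1)‖ :=
    (summable_nat_add_iff 1).mpr (summable_norm_centralBinom_smul_pow he)
  simp only [hterm]
  refine ⟨(htail.mul_left ‖c‖).of_nonneg_of_le (fun _ => norm_nonneg _) fun _ => norm_mul_le _ _,
    ?_⟩
  have hcx : Commute c x :=
    ((Commute.refl e).sub_right ((Commute.refl e).pow_right 2)).sub_left
      ((Commute.one_left x).smul_left _)
  have hcc : c ^ 2 = (4⁻¹ : ℂ) • (1 - 4 • x) := by
    simp only [c, x, sq, sub_mul, mul_sub, smul_mul_assoc, mul_smul_comm, one_mul, mul_one]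
    module
  have hlift : e + ∑' k, c * ((k + 1).centralBinom • x ^ (k + 1)) =
      (2⁻¹ : ℂ) • 1 + c * centralBinomSeries x := by
    rw [htail.of_norm.tsum_mul_left, tsum_centralBinom_succ_smul_pow he, mul_sub, mul_one]
    simp only [c]
    abel
  rw [hlift, sq]
  refine isIdempotentElem_half_smul_one_add ?_
  rw [hcx.centralBinomSeries_right.mul_pow, hcc, smul_mul_assoc,
    one_sub_four_nsmul_mul_centralBinomSeries_sq he]
end
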